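/- Let σ = σ_{ij} dx^i dx^j be a symmetric 2-tensor field on ℝ^n whose components satisfy the Killing tensor equation ∂_(k σ_{ij)} = 0 (full symmetrization of the first derivatives vanishes). Then every third-order partial derivative of each component σ_{ij} vanishes; i.e. each σ_{ij} is a polynomial in x_1, ..., x_n of degree at most 2. -/

import Mathlib

/-- Partial derivative in the `i`-th coordinate direction on `ℝⁿ`. -/
noncomputable def pd {n : ℕ} (f : (Fin n → ℝ) → ℝ) (i : Fin n) (p : Fin n → ℝ) : ℝ :=
  fderiv ℝ f p (Pi.single i 1)

lemma pd_contDiff {n : ℕ} {f : (Fin n → ℝ) → ℝ} (hf : ContDiff ℝ (⊤ : ℕ∞) f) (i : Fin n) :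
    ContDiff ℝ (⊤ : ℕ∞) (fun p => pd f i p) := by
  have h1 : ContDiff ℝ (⊤ : ℕ∞) (fderiv ℝ f) := hf.fderiv_right (by simp)
  exact h1.clm_apply contDiff_const

lemma pd_comm {n : ℕ} {f : (Fin n → ℝ) → ℝ} (hf : ContDiff ℝ (⊤ : ℕ∞) f) (i j : Fin n)
    (p : Fin n → ℝ) :
    pd (fun q => pd f i q) j p = pd (fun q => pd f j q) i p := by
  have hdf : ContDiff ℝ (⊤ : ℕ∞) (fderiv ℝ f) := hf.fderiv_right (by simp)
  have h : ∀ (v : Fin n → ℝ) (w : Fin n → ℝ),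
      fderiv ℝ (fun q => fderiv ℝ f q v) p w = fderiv ℝ (fderiv ℝ f) p w v := by
    intro v w
    rw [fderiv_clm_apply (hdf.differentiable (by simp) p) (differentiableAt_const v)]
    simp
  have hsymm : IsSymmSndFDerivAt ℝ f p := (hf.contDiffAt).isSymmSndFDerivAt (by rw [minSmoothness_of_isRCLikeNormedField]; exact WithTop.coe_le_coe.mpr le_top)
  unfold pd
  rw [h, h, hsymm]


lemma pd_add3_zero {n : ℕ} {A B C : (Fin n → ℝ) → ℝ}
    (hA : ContDiff ℝ (⊤ : ℕ∞) A) (hB : ContDiff ℝ (⊤ : ℕ∞) B)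
    (h0 : ∀ q, A q + B q + C q = 0) (i : Fin n) (p : Fin n → ℝ) :
    pd A i p + pd B i p + pd C i p = 0 := by
  have hC : C = fun q => -A q - B q := by funext q; have := h0 q; linarith
  subst hC
  have hdA := (hA.differentiable (by simp)) p
  have hdB := (hB.differentiable (by simp)) p
  unfold pd
  have hf : fderiv ℝ (fun q => -A q - B q) p = -(fderiv ℝ A p) - fderiv ℝ B p :=
    ((hdA.hasFDerivAt.neg).sub hdB.hasFDerivAt).fderiv
  rw [hf]
  simp

lemma core {α : Type*} (w : α → α → α → α → α → ℝ)
    (hs : ∀ i j k l m, w i j k l m = w j i k l m)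
    (h34 : ∀ i j k l m, w i j k l m = w i j l k m)
    (h45 : ∀ i j k l m, w i j k l m = w i j k m l)
    (hc : ∀ i j k l m, w i j k l m + w j k i l m + w k i j l m = 0) :
    ∀ i j k l m, w i j k l m = 0 := by
  have star : ∀ i j k l m, w i j k l m = 2*w k l i j m + w j l i k m + w i l j k m := by
    intro i j k l m
    have e1 := hc i j k l m
    have e2 := hc j k l i m
    have e3 := hc i k l j m
    have r1 : w j k i l m = w j k l i m := h34 j k i l m
    have r2 : w k l j i m = w k l i j m := h34 k l j i m
    have r3 : w l j k i m = w j l i k m := by rw [← h34 j l k i m, ← hs l j k i m]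
    have r4 : w k i j l m = w i k l j m := by rw [← h34 i k j l m, ← hs k i j l m]
    have r5 : w l i k j m = w i l j k m := by rw [← h34 i l k j m, ← hs l i k j m]
    linarith
  have hD : ∀ i j k l m, 3*(w i j k l m - w k l i j m) = w i l j k m - w j k i l m := by
    intro i j k l m
    have s1 := star i j k l m
    have s2 := star k l i j m
    have r1 : w l j k i m = w j l i k m := by rw [← h34 j l k i m, ← hs l j k i m]
    have r2 : w k j l i m = w j k i l m := by rw [← h34 j k l i m, ← hs k j l i m]
    linarith
  have pair : ∀ i j k l m, w i j k l m = w k l i j m := by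
    intro i j k l m
    have d1 := hD i j k l m
    have d2 := hD i l j k m
    have d3 := hD i k l j m
    linarith
  -- jm swap : w i j k l m = w i m j k l
  have jm : ∀ i j k l m, w i j k l m = w i m j k l := by
    intro i j k l m
    calc w i j k l m = w k l i j m := pair i j k l m
    _ = w k l i m j := h45 k l i j m
    _ = w i m k l j := (pair i m k l j).symm
    _ = w i m k j l := h45 i m k l j
    _ = w i m j k l := (h34 i m j k l).symm
  have swap23 : ∀ i j k l m, w i j k l m = w i k j l m := by
    intro i j k l m
    calc w i j k l m = w i k l m j := (jm i k l m j).symm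
    _ = w i k l j m := h45 i k l m j
    _ = w i k j l m := (h34 i k j l m).symm
  intro i j k l m
  have e := hc i j k l m
  have a1 : w j k i l m = w i j k l m := by rw [← swap23 j i k l m, ← hs i j k l m]
  have a2 : w k i j l m = w i j k l m := by rw [hs k i j l m, ← swap23 i j k l m]
  linarith


/-- If a symmetric 2-tensor `σ` on `ℝⁿ` satisfies the Killing tensor equation
`∂_(k σ_{ij)} = 0`, i.e. `∂_k σ_{ij} + ∂_i σ_{jk} + ∂_j σ_{ki} = 0`, then all
third-order partial derivatives of each component vanish; each `σ_{ij}` is a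
polynomial of degree at most 2. -/
theorem killing_two_tensor_polynomial
    (n : ℕ) (σ : (Fin n → ℝ) → (Fin n → Fin n → ℝ))
    (hsmooth : ContDiff ℝ (⊤ : ℕ∞) σ)
    (hsymm : ∀ (p : Fin n → ℝ) (i j : Fin n), σ p i j = σ p j i)
    (hkilling : ∀ (p : Fin n → ℝ) (i j k : Fin n),
      pd (fun q => σ q i j) k p + pd (fun q => σ q j k) i p +
        pd (fun q => σ q k i) j p = 0) :
    ∀ (p : Fin n → ℝ) (i j a b c : Fin n),
      pd (fun q => pd (fun r => pd (fun s => σ s i j) a r) b q) c p = 0 := by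
  intro p i j a b c
  have hcomp : ∀ i j : Fin n, ContDiff ℝ (⊤ : ℕ∞) (fun q => σ q i j) := fun i j =>
    contDiff_pi.mp (contDiff_pi.mp hsmooth i) j
  set w : Fin n → Fin n → Fin n → Fin n → Fin n → ℝ := fun i j k l m =>
    pd (fun q => pd (fun r => pd (fun s => σ s i j) k r) l q) m p with hw
  show w i j a b c = 0
  apply core w
  · intro i j k l m
    have : (fun s => σ s i j) = (fun s => σ s j i) := funext fun s => hsymm s i j
    simp only [hw, this]
  · intro i j k l m
    have : (fun q => pd (fun r => pd (fun s => σ s i j) k r) l q)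
        = (fun q => pd (fun r => pd (fun s => σ s i j) l r) k q) :=
      funext fun q => pd_comm (hcomp i j) k l q
    simp only [hw, this]
  · intro i j k l m
    simp only [hw]
    exact pd_comm (pd_contDiff (hcomp i j) k) l m p
  · intro i j k l m
    simp only [hw]
    have L2 : ∀ q, pd (fun r => pd (fun s => σ s i j) k r) l q
        + pd (fun r => pd (fun s => σ s j k) i r) l q
        + pd (fun r => pd (fun s => σ s k i) j r) l q = 0 := fun q =>
      pd_add3_zero (pd_contDiff (hcomp i j) k) (pd_contDiff (hcomp j k) i)
        (fun q' => hkilling q' i j k) l q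
    exact pd_add3_zero
      (pd_contDiff (pd_contDiff (hcomp i j) k) l)
      (pd_contDiff (pd_contDiff (hcomp j k) i) l) L2 m p
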